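/- Let X be a finite uniform d-dimensional simplicial complex which is (d−1)-connected. Then d+1 is an eigenvalue of the upper Laplacian Δ⁺ if and only if X is disorientable. -/

import Mathlib

open scoped BigOperators Classical
open Filter Topology

noncomputable section

/-- A simplicial complex on a vertex set `V`: a family of finite subsets of `V`
(the cells) closed under taking nonempty subsets. -/
structure SComplex (V : Type*) where
  cells : Set (Finset V)
  down_closed : ∀ ⦃s t : Finset V⦄, s ∈ cells → t ⊆ s → t.Nonempty → t ∈ cells

namespace SComplex

variable {V : Type*} (X : SComplex V)

/-- The tuple `σ` of `n` vertices spans an `(n-1)`-dimensional cell of `X`. -/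
def IsCellT {n : ℕ} (σ : Fin n → V) : Prop :=
  Function.Injective σ ∧ Finset.image σ Finset.univ ∈ X.cells

/-- The degree of a cell `s`: the number of cells with one more vertex containing it. -/
def degS (s : Finset V) : ℕ :=
  Set.ncard {t : Finset V | t ∈ X.cells ∧ t.card = s.card + 1 ∧ s ⊆ t}

/-- Degree of the cell spanned by a tuple. -/
def degT {n : ℕ} (σ : Fin n → V) : ℕ :=
  X.degS (Finset.image σ Finset.univ)

/-- An `(n-1)`-form: an alternating function on oriented `(n-1)`-cells, encoded as a
function on `n`-tuples of vertices which vanishes off the cells of `X` and is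
antisymmetric under permutations. -/
def IsForm (n : ℕ) (f : (Fin n → V) → ℝ) : Prop :=
  (∀ σ, ¬ X.IsCellT σ → f σ = 0) ∧
  ∀ (σ : Fin n → V) (π : Equiv.Perm (Fin n)),
    f (σ ∘ π) = ((Equiv.Perm.sign π : ℤ) : ℝ) * f σ

/-- The Dirac form `𝟙_{σ₀}`: 1 at `σ₀`, -1 at the reversed orientation, 0 elsewhere. -/
def dirac {n : ℕ} (σ₀ : Fin n → V) : (Fin n → V) → ℝ := fun σ =>
  if ∃ π : Equiv.Perm (Fin n), Equiv.Perm.sign π = 1 ∧ σ = σ₀ ∘ π then 1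
  else if ∃ π : Equiv.Perm (Fin n), Equiv.Perm.sign π = -1 ∧ σ = σ₀ ∘ π then -1
  else 0

/-- The boundary operator: `(∂f)(σ) = Σ_{v : vσ ∈ X} f(vσ)`. -/
def bdry {n : ℕ} (f : (Fin (n + 1) → V) → ℝ) : (Fin n → V) → ℝ := fun σ =>
  ∑ᶠ v ∈ {v : V | X.IsCellT (Fin.cons v σ)}, f (Fin.cons v σ)

/-- The weighted sum of `f` over the neighbours of `σ`:
`Σ_{σ' ∼ σ} f(σ')/deg σ' = Σ_{v ◁ σ} Σ_i (-1)^i f(v(σ∖σ_i))/deg(v(σ∖σ_i))`. -/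
def nbrW {n : ℕ} (f : (Fin (n + 1) → V) → ℝ) : (Fin (n + 1) → V) → ℝ := fun σ =>
  ∑ᶠ v ∈ {v : V | X.IsCellT (Fin.cons v σ)},
    ∑ i : Fin (n + 1),
      (-1 : ℝ) ^ (i : ℕ) * f (Fin.cons v (σ ∘ i.succAbove)) /
        (X.degT (Fin.cons v (σ ∘ i.succAbove)) : ℝ)

/-- The unweighted sum of `f` over the neighbours of `σ`: `Σ_{σ' ∼ σ} f(σ')`. -/
def nbrU {n : ℕ} (f : (Fin (n + 1) → V) → ℝ) : (Fin (n + 1) → V) → ℝ := fun σ =>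
  ∑ᶠ v ∈ {v : V | X.IsCellT (Fin.cons v σ)},
    ∑ i : Fin (n + 1), (-1 : ℝ) ^ (i : ℕ) * f (Fin.cons v (σ ∘ i.succAbove))

/-- The upper Laplacian `(Δ⁺f)(σ) = f(σ) - Σ_{σ'∼σ} f(σ')/deg σ'`. -/
def lapUp {n : ℕ} (f : (Fin (n + 1) → V) → ℝ) : (Fin (n + 1) → V) → ℝ := fun σ =>
  f σ - X.nbrW f σ

/-- The transition operator of the `p`-lazy walk:
`(Af)(σ) = p f(σ) + ((1-p)/d) Σ_{σ'∼σ} f(σ')/deg σ'`, where `d = n+1`. -/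
def transOp {n : ℕ} (p : ℝ) (f : (Fin (n + 1) → V) → ℝ) : (Fin (n + 1) → V) → ℝ := fun σ =>
  p * f σ + ((1 - p) / ((n : ℝ) + 1)) * X.nbrW f σ

/-- The normalized expectation process `Ẽ_nn = (d/(p(d-1)+1))^nn • A^nn 𝟙_{σ₀}`. -/
def nexp {n : ℕ} (p : ℝ) (σ₀ : Fin (n + 1) → V) (nn : ℕ) : (Fin (n + 1) → V) → ℝ :=
  (((n : ℝ) + 1) / (p * (n : ℝ) + 1)) ^ nn • (X.transOp p)^[nn] (SComplex.dirac σ₀)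

/-- The weighted inner product `⟨f,g⟩ = Σ_{σ ∈ X^{n-1}} f(σ)g(σ)/deg σ`
(each unoriented cell is represented by `n!` tuples). -/
def innerW [Fintype V] {n : ℕ} (f g : (Fin n → V) → ℝ) : ℝ :=
  (1 / (n.factorial : ℝ)) * ∑ σ : Fin n → V, f σ * g σ / (X.degT σ : ℝ)

/-- The unweighted inner product `⟨f,g⟩ = Σ_{σ ∈ X^{n-1}} f(σ)g(σ)`. -/
def innerU [Fintype V] {n : ℕ} (f g : (Fin n → V) → ℝ) : ℝ :=
  (1 / (n.factorial : ℝ)) * ∑ σ : Fin n → V, f σ * g σ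

/-- The norm induced by the weighted inner product. -/
def normW [Fintype V] {n : ℕ} (f : (Fin n → V) → ℝ) : ℝ :=
  Real.sqrt (X.innerW f f)

/-- `f` is a closed `(d-1)`-form (`f ∈ Z^{d-1} = ker ∂_d^*`), characterized by
orthogonality to the image of `∂_d`. -/
def IsClosedForm [Fintype V] (m : ℕ) (f : (Fin (m + 2) → V) → ℝ) : Prop :=
  X.IsForm (m + 2) f ∧
  ∀ g : (Fin (m + 3) → V) → ℝ, X.IsForm (m + 3) g → X.innerW f (X.bdry g) = 0

/-- `f` is an exact `(d-1)`-form (`f ∈ B^{d-1} = im ∂_{d-1}^*`): `f = ∂_{d-1}^* g` for a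
`(d-2)`-form `g`, characterized by the adjoint identity. -/
def IsExactForm [Fintype V] (m : ℕ) (f : (Fin (m + 2) → V) → ℝ) : Prop :=
  X.IsForm (m + 2) f ∧
  ∃ g : (Fin (m + 1) → V) → ℝ, X.IsForm (m + 1) g ∧
    ∀ h : (Fin (m + 2) → V) → ℝ, X.IsForm (m + 2) h →
      X.innerW f h = innerU g (X.bdry h)

/-- Two tuples span the same oriented cell. -/
def SameOr {n : ℕ} (σ σ' : Fin n → V) : Prop :=
  ∃ π : Equiv.Perm (Fin n), Equiv.Perm.sign π = 1 ∧ σ' = σ ∘ π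

/-- The neighbour relation on oriented `(d-1)`-cells: `σ ∼ σ'` iff there is an oriented
`d`-cell of which both `σ` and the reversal of `σ'` are faces with the induced
orientation; equivalently `σ' = (-1)^i v(σ∖σ_i)` for some `v ◁ σ`. -/
def Nbr {n : ℕ} (σ σ' : Fin (n + 1) → V) : Prop :=
  ∃ (v : V) (i : Fin (n + 1)), X.IsCellT (Fin.cons v σ) ∧
    (if Even (i : ℕ) then SameOr σ' (Fin.cons v (σ ∘ i.succAbove))
     else SameOr σ' (Fin.cons v (σ ∘ i.succAbove) ∘ Equiv.swap 0 1))

/-- `σ` is a face of the oriented cell `τ` with the orientation induced by `τ`. -/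
def IsInducedFace {n : ℕ} (σ : Fin (n + 1) → V) (τ : Fin (n + 2) → V) : Prop :=
  ∃ i : Fin (n + 2), if Even (i : ℕ) then SameOr σ (τ ∘ i.succAbove)
    else SameOr σ (τ ∘ i.succAbove ∘ Equiv.swap 0 1)

/-- The family `𝒯` of `d`-cells (`d = m+2`) admits a disorientation: a choice of
orientation for each cell of `𝒯` such that any two of them sharing a
codimension-one face induce the same orientation on it. -/
def HasDisorientation (m : ℕ) (𝒯 : Set (Finset V)) : Prop :=
  ∃ c : Finset V → (Fin (m + 3) → V),
    (∀ t ∈ 𝒯, Function.Injective (c t) ∧ Finset.image (c t) Finset.univ = t) ∧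
    ∀ t ∈ 𝒯, ∀ t' ∈ 𝒯, t ≠ t' → (t ∩ t').card = m + 2 →
      ∃ σ : Fin (m + 2) → V, Function.Injective σ ∧
        Finset.image σ Finset.univ = t ∩ t' ∧
        IsInducedFace σ (c t) ∧ IsInducedFace σ (c t')

/-- `X` (of dimension `d`) has no simple `d`-loops: no non-backtracking closed chain
of `d`-cells in which consecutive cells share a `(d-1)`-cell. -/
def NoSimpleLoops (d : ℕ) : Prop :=
  ∀ (n : ℕ) (τ : ℕ → Finset V), 2 ≤ n → (∀ i, τ (i + n) = τ i) →
    (∀ i, τ i ∈ X.cells ∧ (τ i).card = d + 1) →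
    (∀ i, (τ i ∩ τ (i + 1)) ∈ X.cells ∧ (τ i ∩ τ (i + 1)).card = d) →
    (∀ i, τ i ≠ τ (i + 2)) → False

end SComplex

open SComplex

/-!
Write `g = f / deg`. The eigenvalue equation `Δ⁺f = (d+1) f` says that at every `(d-1)`-cell `σ`
the `d · deg σ` signed neighbour values `(-1)^k g(v(σ∖σ_k))` sum to `-d · deg σ · g(σ)`. At a
maximum of `|g|` this forces every one of them to equal `-g(σ)`, so `g` changes sign along each
neighbour step, and by `(d-1)`-connectedness `|g|` is constant on `X^{d-1}`. Inside a `d`-cell the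
first face is a neighbour of the reversal of every other induced face, so all induced faces of a
`d`-cell carry the same value of `g`; orienting each `d`-cell so that this value is positive gives
a disorientation. Conversely, a disorientation yields the form `σ ↦ ±deg σ`, with sign `+` exactly
when `σ` carries the orientation induced by the `d`-cells containing it, and then every neighbour
term equals `-f(σ)/deg σ`.
-/

open Equiv Equiv.Perm Function Finset

theorem eq_neg_of_abs_le_of_sum_eq {ι : Type*} {s : Finset ι} {a : ι → ℝ} {c : ℝ}
    (hle : ∀ i ∈ s, |a i| ≤ |c|) (hsum : ∑ i ∈ s, a i = -(#s * c)) : ∀ i ∈ s, a i = -c := by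
  have hsum' : ∑ i ∈ s, a i = ∑ _i ∈ s, -c := by simp [hsum]
  rcases le_total 0 c with hc | hc
  · have hge (i) (hi : i ∈ s) : -c ≤ a i := by
      linarith [neg_abs_le (a i), hle i hi, abs_of_nonneg hc]
    exact fun i hi => ((sum_eq_sum_iff_of_le hge).mp hsum'.symm i hi).symm
  · have hle' (i) (hi : i ∈ s) : a i ≤ -c := by
      linarith [le_abs_self (a i), hle i hi, abs_of_nonpos hc]
    exact (sum_eq_sum_iff_of_le hle').mp hsum'

namespace SComplex

variable {V : Type*}

section Tuples

variable {n : ℕ}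

theorem image_comp_perm (σ : Fin n → V) (π : Perm (Fin n)) :
    image (σ ∘ π) univ = image σ univ := by
  rw [← image_image, image_univ_equiv]

theorem image_comp_subset {α : Type*} [Fintype α] (τ : Fin n → V) (h : α → Fin n) :
    image (τ ∘ h) univ ⊆ image τ univ := by
  rw [← image_image]
  exact image_subset_image (subset_univ _)

theorem exists_injective_image_eq {s : Finset V} (hs : #s = n) :
    ∃ σ : Fin n → V, Injective σ ∧ image σ univ = s := by
  subst hs
  refine ⟨(↑) ∘ s.equivFin.symm, Subtype.val_injective.comp s.equivFin.symm.injective, ?_⟩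
  rw [← image_image, image_univ_equiv, univ_eq_attach, attach_image_val]

theorem exists_perm_of_image_subset {x y : Fin n → V} (hy : Injective y)
    (h : image y univ ⊆ image x univ) : ∃ π : Perm (Fin n), y = x ∘ π := by
  have hmem (i : Fin n) : ∃ j, x j = y i := by simpa using h (mem_image_of_mem y (mem_univ i))
  choose p hp using hmem
  have hp_inj : Injective p := fun i i' hii' => hy (by rw [← hp i, ← hp i', hii'])
  exact ⟨Equiv.ofBijective p (Finite.injective_iff_bijective.mp hp_inj),
    funext fun i => (hp i).symm⟩

theorem exists_succAbove_of_image_subset {τ : Fin (n + 2) → V} {σ : Fin (n + 1) → V}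
    (hτ : Injective τ) (hσ : Injective σ) (h : image σ univ ⊆ image τ univ) :
    ∃ (i : Fin (n + 2)) (π : Perm (Fin (n + 1))), σ = τ ∘ i.succAbove ∘ π := by
  obtain ⟨a, ha, hins⟩ := exists_eq_insert_iff.mpr ⟨h, by
    simp [card_image_of_injective _ hσ, card_image_of_injective _ hτ]⟩
  obtain ⟨i, -, rfl⟩ := mem_image.mp (hins ▸ mem_insert_self a _)
  obtain ⟨π, hπ⟩ := exists_perm_of_image_subset (x := τ ∘ i.succAbove) hσ fun b hb => by
    obtain ⟨l, -, rfl⟩ := mem_image.mp (h hb)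
    obtain ⟨k, rfl⟩ := Fin.exists_succAbove_eq (x := l) (y := i) (by rintro rfl; exact ha hb)
    exact mem_image_of_mem _ (mem_univ k)
  exact ⟨i, π, hπ⟩

theorem cons_comp_succAbove (v : V) (σ : Fin (n + 1) → V) (k : Fin (n + 1)) :
    Fin.cons v (σ ∘ k.succAbove) = (Fin.cons v σ : Fin (n + 2) → V) ∘ k.succ.succAbove :=
  (Fin.cons_comp_succ_succAbove v σ k).symm

theorem succAbove_comp_perm_inj {i j : Fin (n + 1)} {π ρ : Perm (Fin n)}
    (h : i.succAbove ∘ π = j.succAbove ∘ ρ) : i = j ∧ π = ρ := by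
  have hij : i = j := by
    simpa [EquivLike.range_comp, Fin.range_succAbove] using congrArg Set.range h
  subst hij
  exact ⟨rfl, Equiv.ext fun x => Fin.succAbove_right_injective (congrFun h x)⟩

theorem exists_perm_comp_succAbove (u : Perm (Fin (n + 1))) (p : Fin (n + 1)) :
    ∃ w : Perm (Fin n), u ∘ p.succAbove = (u p).succAbove ∘ w ∧
      sign w = (-1) ^ (u p : ℕ) * sign u * (-1) ^ (p : ℕ) := by
  -- Conjugating by cycle ranges moves `p` and `u p` to `0`, so `ρ` fixes `0`.
  set ρ : Perm (Fin (n + 1)) := (u p).cycleRange * u * p.cycleRange⁻¹ with hρ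
  obtain ⟨⟨q, w⟩, hqw⟩ := decomposeFin.symm.surjective ρ
  obtain rfl : q = 0 := by
    rw [← decomposeFin_symm_apply_zero q w, hqw]
    simp [hρ, Perm.mul_apply, Fin.cycleRange_self]
  refine ⟨w, funext fun x => ?_, ?_⟩
  · have h := congrArg (· x.succ) hqw
    simp only [decomposeFin_symm_apply_succ, swap_self, refl_apply, hρ, Perm.mul_apply,
      Perm.inv_def, Fin.cycleRange_symm_succ] at h
    rw [comp_apply, comp_apply, ← Fin.cycleRange_symm_succ (u p), h, symm_apply_apply]
  · simpa [hρ, Fin.sign_cycleRange] using congrArg sign hqw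

theorem sameOr_comp_iff {x : Fin n → V} (hx : Injective x) {π ρ : Perm (Fin n)} :
    SameOr (x ∘ π) (x ∘ ρ) ↔ sign π = sign ρ := by
  constructor
  · rintro ⟨α, hα, h⟩
    have : ρ = π * α := Equiv.ext fun i => hx (congrFun h i)
    rw [this, map_mul, hα, mul_one]
  · intro h
    exact ⟨π⁻¹ * ρ, by rw [map_mul, map_inv, h, inv_mul_cancel], by ext; simp⟩

/-- `τ ∘ i.succAbove ∘ twist n i` is the `i`-th face of `τ` with its induced orientation. -/
def twist (n i : ℕ) : Perm (Fin (n + 2)) := if Even i then 1 else swap 0 1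

theorem sign_twist (n i : ℕ) : sign (twist n i) = (-1) ^ i := by
  unfold twist
  split_ifs with hi
  · simp [hi.neg_one_pow]
  · simp [(Nat.not_even_iff_odd.mp hi).neg_one_pow]

variable {τ : Fin (n + 3) → V} {σ : Fin (n + 2) → V}

theorem isInducedFace_iff_exists :
    IsInducedFace σ τ ↔ ∃ i : Fin (n + 3), SameOr σ (τ ∘ i.succAbove ∘ twist n i) := by
  refine exists_congr fun i => ?_
  unfold twist
  split_ifs <;> rfl

theorem IsInducedFace.image_subset (h : IsInducedFace σ τ) : image σ univ ⊆ image τ univ := by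
  obtain ⟨i, π, -, hπ⟩ := isInducedFace_iff_exists.mp h
  rw [← image_comp_perm σ π, ← hπ]
  exact image_comp_subset τ _

theorem isInducedFace_comp_succAbove_iff (hτ : Injective τ) (i : Fin (n + 3))
    (π : Perm (Fin (n + 2))) :
    IsInducedFace (τ ∘ i.succAbove ∘ π) τ ↔ sign π = (-1) ^ (i : ℕ) := by
  rw [isInducedFace_iff_exists]
  constructor
  · rintro ⟨j, ρ, hρ, h⟩
    obtain ⟨rfl, htw⟩ := succAbove_comp_perm_inj (j := i) (ρ := π * ρ) (hτ.comp_left h)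
    rw [← sign_twist n j, htw, map_mul, hρ, mul_one]
  · intro h
    exact ⟨i, (sameOr_comp_iff (hτ.comp Fin.succAbove_right_injective)).mpr
      (by rw [h, sign_twist])⟩

theorem exists_isInducedFace_image_eq (hτ : Injective τ) {s : Finset V} (hs : #s = n + 2)
    (hsτ : s ⊆ image τ univ) :
    ∃ σ : Fin (n + 2) → V, Injective σ ∧ image σ univ = s ∧ IsInducedFace σ τ := by
  obtain ⟨ρ, hρ, rfl⟩ := exists_injective_image_eq hs
  obtain ⟨i, π, rfl⟩ := exists_succAbove_of_image_subset hτ hρ hsτ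
  refine ⟨τ ∘ i.succAbove ∘ twist n i,
    hτ.comp (Fin.succAbove_right_injective.comp (twist n i).injective),
    (image_comp_perm (τ ∘ i.succAbove) _).trans (image_comp_perm _ π).symm,
    (isInducedFace_comp_succAbove_iff hτ i _).mpr (sign_twist n i)⟩

def inducedSign (τ : Fin (n + 3) → V) (σ : Fin (n + 2) → V) : ℤˣ :=
  if IsInducedFace σ τ then 1 else -1

theorem inducedSign_eq_one_iff : inducedSign τ σ = 1 ↔ IsInducedFace σ τ := by
  unfold inducedSign
  split_ifs with h <;> simp [h]

theorem inducedSign_comp_succAbove (hτ : Injective τ) (i : Fin (n + 3))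
    (π : Perm (Fin (n + 2))) :
    inducedSign τ (τ ∘ i.succAbove ∘ π) = (-1) ^ (i : ℕ) * sign π := by
  unfold inducedSign
  split_ifs with h
  · rw [(isInducedFace_comp_succAbove_iff hτ i π).mp h, Int.units_mul_self]
  · rw [isInducedFace_comp_succAbove_iff hτ, ← Ne, Int.units_ne_iff_eq_neg] at h
    rw [h, mul_neg, Int.units_mul_self]

theorem inducedSign_comp_perm (hτ : Injective τ) (hσ : Injective σ)
    (h : image σ univ ⊆ image τ univ) (π : Perm (Fin (n + 2))) :
    inducedSign τ (σ ∘ π) = inducedSign τ σ * sign π := by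
  obtain ⟨i, ρ, rfl⟩ := exists_succAbove_of_image_subset hτ hσ h
  rw [show (τ ∘ i.succAbove ∘ ρ) ∘ π = τ ∘ i.succAbove ∘ (ρ * π) from rfl,
    inducedSign_comp_succAbove hτ, inducedSign_comp_succAbove hτ, map_mul, mul_assoc]

theorem inducedSign_perm_comp (hτ : Injective τ) (hσ : Injective σ)
    (h : image σ univ ⊆ image τ univ) (μ : Perm (Fin (n + 3))) :
    inducedSign (τ ∘ μ) σ = sign μ * inducedSign τ σ := by
  have hτμ : Injective (τ ∘ μ) := hτ.comp μ.injective
  obtain ⟨i, π, rfl⟩ := exists_succAbove_of_image_subset hτμ hσ (by rwa [image_comp_perm])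
  obtain ⟨w, hw, hsign⟩ := exists_perm_comp_succAbove μ i
  have hface : (τ ∘ μ) ∘ i.succAbove ∘ π = τ ∘ (μ i).succAbove ∘ (w * π) := by
    rw [Perm.coe_mul, ← comp_assoc (μ i).succAbove, ← hw]
    rfl
  rw [inducedSign_comp_succAbove hτμ, hface, inducedSign_comp_succAbove hτ, map_mul, hsign]
  simp only [mul_assoc, mul_left_comm _ (sign μ)]
  rw [← mul_assoc (sign μ), Int.units_mul_self, one_mul, ← mul_assoc, Int.units_mul_self, one_mul]

end Tuples

variable (X : SComplex V) {n : ℕ}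

def cellsOfCard (k : ℕ) : Set (Finset V) := {t | t ∈ X.cells ∧ #t = k}

def linkVerts [Fintype V] (σ : Fin n → V) : Finset V :=
  univ.filter fun v => X.IsCellT (Fin.cons v σ)

def degNormalized (f : (Fin n → V) → ℝ) : (Fin n → V) → ℝ := fun σ => f σ / X.degT σ

variable {X}

theorem IsCellT.comp_perm {σ : Fin n → V} (h : X.IsCellT σ) (π : Perm (Fin n)) :
    X.IsCellT (σ ∘ π) :=
  ⟨h.1.comp π.injective, by rw [image_comp_perm]; exact h.2⟩

theorem isCellT_comp_perm_iff {σ : Fin n → V} (π : Perm (Fin n)) :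
    X.IsCellT (σ ∘ π) ↔ X.IsCellT σ :=
  ⟨fun h => by simpa [comp_assoc] using h.comp_perm π⁻¹, fun h => h.comp_perm π⟩

theorem IsCellT.comp_succAbove {τ : Fin (n + 2) → V} (h : X.IsCellT τ) (i : Fin (n + 2)) :
    X.IsCellT (τ ∘ i.succAbove) :=
  ⟨h.1.comp Fin.succAbove_right_injective,
    X.down_closed h.2 (image_comp_subset τ _) (univ_nonempty.image _)⟩

theorem IsCellT.tail {τ : Fin (n + 2) → V} (h : X.IsCellT τ) : X.IsCellT (Fin.tail τ) :=
  h.comp_succAbove 0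

theorem isCellT_cons_iff {σ : Fin n → V} (hσ : Injective σ) (v : V) :
    X.IsCellT (Fin.cons v σ) ↔ v ∉ image σ univ ∧ insert v (image σ univ) ∈ X.cells := by
  have himage : image (Fin.cons v σ) univ = insert v (image σ univ) := by
    rw [← coe_inj, coe_image, coe_univ, Set.image_univ, Fin.range_cons, coe_insert, coe_image,
      coe_univ, Set.image_univ]
  simp [IsCellT, Fin.cons_injective_iff, hσ, himage]

theorem card_image_of_isCellT {σ : Fin n → V} (h : X.IsCellT σ) : #(image σ univ) = n := by
  rw [card_image_of_injective _ h.1, card_univ, Fintype.card_fin]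

theorem degT_comp_perm (σ : Fin n → V) (π : Perm (Fin n)) : X.degT (σ ∘ π) = X.degT σ := by
  rw [degT, image_comp_perm, degT]

theorem card_linkVerts [Fintype V] {σ : Fin n → V} (hσ : Injective σ) :
    #(X.linkVerts σ) = X.degT σ := by
  set s := image σ univ
  have hcofaces : {t | t ∈ X.cells ∧ #t = #s + 1 ∧ s ⊆ t}
      = (insert · s) '' {v | v ∉ s ∧ insert v s ∈ X.cells} := by
    ext t
    constructor
    · rintro ⟨ht, hcard, hst⟩
      obtain ⟨v, hv, rfl⟩ := exists_eq_insert_iff.mpr ⟨hst, hcard.symm⟩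
      exact ⟨v, ⟨hv, ht⟩, rfl⟩
    · rintro ⟨v, ⟨hv, ht⟩, rfl⟩
      exact ⟨ht, card_insert_of_notMem hv, subset_insert v s⟩
  have hinj : Set.InjOn (insert · s) {v | v ∉ s ∧ insert v s ∈ X.cells} :=
    fun v hv w _ hvw => (insert_inj hv.1).mp hvw
  rw [degT, degS, hcofaces, hinj.ncard_image, ← Set.ncard_coe_finset, linkVerts,
    coe_filter_univ]
  simp_rw [isCellT_cons_iff hσ]
  rfl

theorem IsCellT.degT_comp_succAbove_pos [Finite V] {τ : Fin (n + 2) → V} (h : X.IsCellT τ)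
    (i : Fin (n + 2)) : 0 < X.degT (τ ∘ i.succAbove) := by
  refine (Set.ncard_pos).mpr ⟨image τ univ, h.2, ?_, image_comp_subset τ _⟩
  rw [card_image_of_isCellT h, card_image_of_isCellT (h.comp_succAbove i)]

theorem exists_cell_of_degT_ne_zero {σ : Fin n → V} (h : X.degT σ ≠ 0) :
    ∃ t ∈ X.cells, #t = #(image σ univ) + 1 ∧ image σ univ ⊆ t :=
  Set.nonempty_of_ncard_ne_zero h

theorem IsForm.apply_of_sameOr {f : (Fin n → V) → ℝ} (hf : X.IsForm n f) {σ σ' : Fin n → V}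
    (h : SameOr σ σ') : f σ' = f σ := by
  obtain ⟨π, hπ, rfl⟩ := h
  rw [hf.2, hπ, Units.val_one, Int.cast_one, one_mul]

theorem IsForm.degNormalized {f : (Fin n → V) → ℝ} (hf : X.IsForm n f) :
    X.IsForm n (X.degNormalized f) :=
  ⟨fun σ h => by simp [SComplex.degNormalized, hf.1 σ h], fun σ π => by
    simp only [SComplex.degNormalized, hf.2, degT_comp_perm]
    ring⟩

theorem nbrW_eq_sum [Fintype V] (f : (Fin (n + 1) → V) → ℝ) (σ : Fin (n + 1) → V) :
    X.nbrW f σ = ∑ v ∈ X.linkVerts σ, ∑ k : Fin (n + 1),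
      (-1) ^ (k : ℕ) * X.degNormalized f (Fin.cons v (σ ∘ k.succAbove)) := by
  rw [nbrW, ← finsum_mem_coe_finset, linkVerts, coe_filter_univ]
  simp only [degNormalized, mul_div_assoc]

theorem nbr_iff {σ σ' : Fin (n + 2) → V} :
    X.Nbr σ σ' ↔ ∃ (v : V) (k : Fin (n + 2)), X.IsCellT (Fin.cons v σ) ∧
      SameOr σ' (Fin.cons v (σ ∘ k.succAbove) ∘ twist n k) := by
  refine exists_congr fun v => exists_congr fun k => and_congr_right fun _ => ?_
  unfold twist
  split_ifs <;> rfl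

theorem Nbr.isCellT {σ σ' : Fin (n + 2) → V} (h : X.Nbr σ σ') : X.IsCellT σ := by
  obtain ⟨v, k, hv, -⟩ := nbr_iff.mp h
  exact hv.tail

theorem IsCellT.nbr_tail {τ : Fin (n + 3) → V} (hτ : X.IsCellT τ) (k : Fin (n + 2)) :
    X.Nbr (Fin.tail τ) (τ ∘ k.succ.succAbove ∘ twist n k) :=
  nbr_iff.mpr ⟨τ 0, k, by rwa [Fin.cons_self_tail], by
    rw [cons_comp_succAbove, Fin.cons_self_tail]
    exact ⟨1, map_one _, rfl⟩⟩

theorem IsForm.apply_eq_inducedSign_mul {g : (Fin (n + 2) → V) → ℝ} (hg : X.IsForm (n + 2) g)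
    (hflip : ∀ σ σ', X.Nbr σ σ' → g σ' = -g σ) {τ : Fin (n + 3) → V} (hτ : X.IsCellT τ)
    {ρ : Fin (n + 2) → V} (hρ : Injective ρ) (hρτ : image ρ univ ⊆ image τ univ) :
    g ρ = inducedSign τ ρ * g (Fin.tail τ) := by
  have hface (i : Fin (n + 3)) : g (τ ∘ i.succAbove) = (-1) ^ (i : ℕ) * g (Fin.tail τ) := by
    cases i using Fin.cases with
    | zero =>
      simp only [Fin.succAbove_zero, Fin.val_zero, pow_zero, one_mul]
      rfl
    | succ k =>
      have h : g ((τ ∘ k.succ.succAbove) ∘ twist n k) = -g (Fin.tail τ) :=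
        hflip _ _ (hτ.nbr_tail k)
      rw [hg.2, sign_twist] at h
      push_cast at h
      have hsq : ((-1 : ℝ) ^ (k : ℕ)) * (-1) ^ (k : ℕ) = 1 := by rw [← mul_pow]; norm_num
      rw [Fin.val_succ, pow_succ]
      linear_combination (-1 : ℝ) ^ (k : ℕ) * h - g (τ ∘ k.succ.succAbove) * hsq
  obtain ⟨i, π, rfl⟩ := exists_succAbove_of_image_subset hτ.1 hρ hρτ
  have hperm : g (τ ∘ i.succAbove ∘ π) = sign π * g (τ ∘ i.succAbove) := hg.2 (τ ∘ i.succAbove) π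
  rw [inducedSign_comp_succAbove hτ.1, hperm, hface]
  push_cast
  ring

theorem exists_orientation_eq_inducedSign_mul {g : (Fin (n + 2) → V) → ℝ}
    (hg : X.IsForm (n + 2) g) (hflip : ∀ σ σ', X.Nbr σ σ' → g σ' = -g σ) {M : ℝ} (hM : 0 ≤ M)
    (habs : ∀ σ, X.IsCellT σ → |g σ| = M) {t : Finset V} (ht : t ∈ X.cellsOfCard (n + 3)) :
    ∃ τ : Fin (n + 3) → V, Injective τ ∧ image τ univ = t ∧
      ∀ ρ : Fin (n + 2) → V, Injective ρ → image ρ univ ⊆ t → g ρ = inducedSign τ ρ * M := by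
  obtain ⟨τ, hτ, rfl⟩ := exists_injective_image_eq ht.2
  have hτcell : X.IsCellT τ := ⟨hτ, ht.1⟩
  have htail : ∀ ρ : Fin (n + 2) → V, Injective ρ → image ρ univ ⊆ image τ univ →
      g ρ = inducedSign τ ρ * g (Fin.tail τ) := fun ρ =>
    hg.apply_eq_inducedSign_mul hflip hτcell
  rcases (abs_eq hM).mp (habs _ hτcell.tail) with h | h
  · exact ⟨τ, hτ, rfl, fun ρ hρ hρτ => by rw [htail ρ hρ hρτ, h]⟩
  · refine ⟨τ ∘ swap 0 1, hτ.comp (swap 0 1).injective, image_comp_perm τ _, fun ρ hρ hρτ => ?_⟩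
    rw [htail ρ hρ hρτ, inducedSign_perm_comp hτ hρ hρτ, sign_swap (by simp), h]
    push_cast
    ring

theorem hasDisorientation_of_nbr_eq_neg [Nonempty V] {g : (Fin (n + 2) → V) → ℝ}
    (hg : X.IsForm (n + 2) g) (hflip : ∀ σ σ', X.Nbr σ σ' → g σ' = -g σ) {M : ℝ} (hM : 0 < M)
    (habs : ∀ σ, X.IsCellT σ → |g σ| = M) : HasDisorientation n (X.cellsOfCard (n + 3)) := by
  choose! c hc using fun t (ht : t ∈ X.cellsOfCard (n + 3)) =>
    exists_orientation_eq_inducedSign_mul hg hflip hM.le habs ht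
  refine ⟨c, fun t ht => ⟨(hc t ht).1, (hc t ht).2.1⟩, fun t ht t' ht' _ hcard => ?_⟩
  obtain ⟨hτ, himage, hg_eq⟩ := hc t ht
  obtain ⟨-, -, hg_eq'⟩ := hc t' ht'
  obtain ⟨σ, hσ, hσimage, hind⟩ := exists_isInducedFace_image_eq hτ hcard
    (by rw [himage]; exact inter_subset_left)
  refine ⟨σ, hσ, hσimage, hind, inducedSign_eq_one_iff.mp ?_⟩
  have h := (hg_eq σ hσ (by rw [hσimage]; exact inter_subset_left)).symm.trans
    (hg_eq' σ hσ (by rw [hσimage]; exact inter_subset_right))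
  rw [inducedSign_eq_one_iff.mpr hind] at h
  exact_mod_cast (mul_right_cancel₀ hM.ne' h).symm

section Eigenforms

variable [Fintype V] {f : (Fin (n + 2) → V) → ℝ}

theorem sum_link_eq_of_lapUp_eq (heig : X.lapUp f = ((n : ℝ) + 3) • f) (σ : Fin (n + 2) → V) :
    ∑ v ∈ X.linkVerts σ, ∑ k : Fin (n + 2),
      (-1) ^ (k : ℕ) * X.degNormalized f (Fin.cons v (σ ∘ k.succAbove)) =
        -((n : ℝ) + 2) * f σ := by
  have h := congrFun heig σ
  simp only [lapUp, Pi.smul_apply, smul_eq_mul] at h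
  rw [← nbrW_eq_sum]
  linarith

theorem apply_eq_zero_of_degT_eq_zero (hf : X.IsForm (n + 2) f)
    (heig : X.lapUp f = ((n : ℝ) + 3) • f) {σ : Fin (n + 2) → V} (hσ : X.degT σ = 0) :
    f σ = 0 := by
  by_cases hcell : X.IsCellT σ
  · have h := sum_link_eq_of_lapUp_eq heig σ
    rw [card_eq_zero.mp ((card_linkVerts hcell.1).trans hσ), sum_empty] at h
    nlinarith
  · exact hf.1 σ hcell

theorem degNormalized_nbr_eq_neg (hf : X.IsForm (n + 2) f)
    (heig : X.lapUp f = ((n : ℝ) + 3) • f) {σ σ' : Fin (n + 2) → V}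
    (hmax : ∀ ρ, |X.degNormalized f ρ| ≤ |X.degNormalized f σ|) (hnbr : X.Nbr σ σ') :
    X.degNormalized f σ' = -X.degNormalized f σ := by
  set g := X.degNormalized f
  have hg : X.IsForm (n + 2) g := hf.degNormalized
  obtain ⟨v, k, hv, hσ'⟩ := nbr_iff.mp hnbr
  have hσ : Injective σ := hv.tail.1
  have hvlink : v ∈ X.linkVerts σ := by simpa [linkVerts]
  have hdeg : (X.degT σ : ℝ) ≠ 0 := by
    rw [← card_linkVerts hσ]
    exact_mod_cast (card_pos.mpr ⟨v, hvlink⟩).ne'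
  set terms := X.linkVerts σ ×ˢ (univ : Finset (Fin (n + 2)))
  have hsum : ∑ p ∈ terms, (-1) ^ (p.2 : ℕ) * g (Fin.cons p.1 (σ ∘ p.2.succAbove)) =
      -(#terms * g σ) := by
    rw [sum_product, sum_link_eq_of_lapUp_eq heig, card_product, card_linkVerts hσ, card_univ,
      Fintype.card_fin]
    simp only [g, degNormalized]
    push_cast
    field_simp
  have hterm := eq_neg_of_abs_le_of_sum_eq (fun p _ => by simpa [abs_mul] using hmax _) hsum
    (v, k) (mem_product.mpr ⟨hvlink, mem_univ k⟩)
  rw [← hg.apply_of_sameOr hσ', hg.2, sign_twist]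
  push_cast
  exact hterm

theorem hasDisorientation_of_lapUp_eq
    (hconn : ∀ σ σ' : Fin (n + 2) → V, X.IsCellT σ → X.IsCellT σ' →
      Relation.ReflTransGen X.Nbr σ σ')
    (hf : X.IsForm (n + 2) f) (hf0 : f ≠ 0) (heig : X.lapUp f = ((n : ℝ) + 3) • f) :
    HasDisorientation n (X.cellsOfCard (n + 3)) := by
  set g := X.degNormalized f
  have hg : X.IsForm (n + 2) g := hf.degNormalized
  obtain ⟨σ₁, hσ₁⟩ : ∃ σ, f σ ≠ 0 := by
    by_contra! h
    exact hf0 (funext h)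
  have : Nonempty V := ⟨σ₁ 0⟩
  obtain ⟨σ₀, hσ₀⟩ := Finite.exists_max fun σ => |g σ|
  have hg₁ : g σ₁ ≠ 0 :=
    div_ne_zero hσ₁ (Nat.cast_ne_zero.mpr fun h => hσ₁ (apply_eq_zero_of_degT_eq_zero hf heig h))
  have hM : 0 < |g σ₀| := (abs_pos.mpr hg₁).trans_le (hσ₀ σ₁)
  have hσ₀cell : X.IsCellT σ₀ := by
    by_contra h
    rw [hg.1 σ₀ h, abs_zero] at hM
    exact hM.false
  have hconst (σ) (h : Relation.ReflTransGen X.Nbr σ₀ σ) : |g σ| = |g σ₀| := by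
    induction h with
    | refl => rfl
    | tail _ hnbr ih =>
      have h : g _ = -g _ := degNormalized_nbr_eq_neg hf heig (fun ρ => ih ▸ hσ₀ ρ) hnbr
      rw [h, abs_neg, ih]
  have habs (σ) (hσ : X.IsCellT σ) : |g σ| = |g σ₀| := hconst σ (hconn σ₀ σ hσ₀cell hσ)
  refine hasDisorientation_of_nbr_eq_neg hg (fun σ σ' hnbr => ?_) hM habs
  exact degNormalized_nbr_eq_neg hf heig (fun ρ => (habs σ hnbr.isCellT).symm ▸ hσ₀ ρ) hnbr

end Eigenforms

section Disorientations

variable {c : Finset V → Fin (n + 3) → V}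

variable (n) in
/-- `HasDisorientation n 𝒯` unfolds to `∃ c, IsDisorientation n 𝒯 c`. -/
def IsDisorientation (𝒯 : Set (Finset V)) (c : Finset V → Fin (n + 3) → V) : Prop :=
  (∀ t ∈ 𝒯, Injective (c t) ∧ image (c t) univ = t) ∧
    ∀ t ∈ 𝒯, ∀ t' ∈ 𝒯, t ≠ t' → #(t ∩ t') = n + 2 →
      ∃ σ : Fin (n + 2) → V, Injective σ ∧ image σ univ = t ∩ t' ∧
        IsInducedFace σ (c t) ∧ IsInducedFace σ (c t')

theorem IsDisorientation.inducedSign_eq (hc : IsDisorientation n (X.cellsOfCard (n + 3)) c)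
    {σ : Fin (n + 2) → V} (hσ : Injective σ) {t t' : Finset V}
    (ht : t ∈ X.cellsOfCard (n + 3)) (ht' : t' ∈ X.cellsOfCard (n + 3))
    (hσt : image σ univ ⊆ t) (hσt' : image σ univ ⊆ t') :
    inducedSign (c t) σ = inducedSign (c t') σ := by
  rcases eq_or_ne t t' with rfl | hne
  · rfl
  have hσcard : #(image σ univ) = n + 2 := by simp [card_image_of_injective _ hσ]
  have hlt : #(t ∩ t') < n + 3 := ht.2 ▸ card_lt_card (inter_subset_left.ssubset_of_ne
    fun h => hne (eq_of_subset_of_card_le (inter_eq_left.mp h) (by rw [ht.2, ht'.2])))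
  have hinter : image σ univ = t ∩ t' :=
    eq_of_subset_of_card_le (subset_inter hσt hσt') (by omega)
  obtain ⟨σ₀, hσ₀, himage, hind, hind'⟩ := hc.2 t ht t' ht' hne (hinter ▸ hσcard)
  obtain ⟨π, rfl⟩ := exists_perm_of_image_subset (x := σ₀) hσ (by rw [himage, hinter])
  have hsub (s) (hs : s ∈ X.cellsOfCard (n + 3)) (h : t ∩ t' ⊆ s) :
      image σ₀ univ ⊆ image (c s) univ := by
    rw [himage, (hc.1 s hs).2]
    exact h
  rw [inducedSign_comp_perm (hc.1 t ht).1 hσ₀ (hsub t ht inter_subset_left),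
    inducedSign_comp_perm (hc.1 t' ht').1 hσ₀ (hsub t' ht' inter_subset_right),
    inducedSign_eq_one_iff.mpr hind, inducedSign_eq_one_iff.mpr hind']

variable (X) in
def disorientSign (c : Finset V → Fin (n + 3) → V) (σ : Fin (n + 2) → V) : ℤˣ :=
  if ∃ t ∈ X.cellsOfCard (n + 3), IsInducedFace σ (c t) then 1 else -1

theorem IsDisorientation.disorientSign_eq (hc : IsDisorientation n (X.cellsOfCard (n + 3)) c)
    {σ : Fin (n + 2) → V} (hσ : Injective σ) {t : Finset V} (ht : t ∈ X.cellsOfCard (n + 3))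
    (hσt : image σ univ ⊆ t) : X.disorientSign c σ = inducedSign (c t) σ := by
  unfold disorientSign
  split_ifs with h
  · obtain ⟨t', ht', hind⟩ := h
    have hσt' : image σ univ ⊆ t' := (hc.1 t' ht').2 ▸ hind.image_subset
    rw [hc.inducedSign_eq hσ ht ht' hσt hσt', inducedSign_eq_one_iff.mpr hind]
  · unfold inducedSign
    rw [if_neg fun hind => h ⟨t, ht, hind⟩]

variable (X) in
def disorientForm (c : Finset V → Fin (n + 3) → V) : (Fin (n + 2) → V) → ℝ := fun σ =>
  if X.IsCellT σ then X.degT σ * X.disorientSign c σ else 0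

theorem IsDisorientation.isForm (hc : IsDisorientation n (X.cellsOfCard (n + 3)) c) :
    X.IsForm (n + 2) (X.disorientForm c) := by
  refine ⟨fun σ h => if_neg h, fun σ π => ?_⟩
  by_cases hσ : X.IsCellT σ
  · simp only [disorientForm, if_pos hσ, if_pos (hσ.comp_perm π), degT_comp_perm]
    rcases eq_or_ne (X.degT σ) 0 with h0 | h0
    · simp [h0]
    obtain ⟨t, htc, htcard, hσt⟩ := exists_cell_of_degT_ne_zero h0
    have ht : t ∈ X.cellsOfCard (n + 3) := ⟨htc, by rw [htcard, card_image_of_isCellT hσ]⟩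
    have hστ : image σ univ ⊆ image (c t) univ := by rwa [(hc.1 t ht).2]
    rw [hc.disorientSign_eq (hσ.comp_perm π).1 ht (by rwa [image_comp_perm]),
      hc.disorientSign_eq hσ.1 ht hσt, inducedSign_comp_perm (hc.1 t ht).1 hσ.1 hστ]
    push_cast
    ring
  · simp [disorientForm, hσ, isCellT_comp_perm_iff]

theorem disorientForm_ne_zero [Finite V] (htop : ∃ t ∈ X.cells, #t = n + 3) :
    X.disorientForm c ≠ 0 := by
  obtain ⟨t, htc, htcard⟩ := htop
  obtain ⟨τ, hτ, rfl⟩ := exists_injective_image_eq htcard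
  have hτcell : X.IsCellT τ := ⟨hτ, htc⟩
  intro h
  have h0 := congrFun h (Fin.tail τ)
  simp [disorientForm, hτcell.tail] at h0
  exact (hτcell.degT_comp_succAbove_pos 0).ne' h0

theorem IsDisorientation.disorientSign_cons_face
    (hc : IsDisorientation n (X.cellsOfCard (n + 3)) c) {v : V} {σ : Fin (n + 2) → V}
    (hvσ : X.IsCellT (Fin.cons v σ)) (k : Fin (n + 2)) :
    (-1) ^ (k : ℕ) * X.disorientSign c (Fin.cons v (σ ∘ k.succAbove)) = -X.disorientSign c σ := by
  set τ : Fin (n + 3) → V := Fin.cons v σ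
  have ht : image τ univ ∈ X.cellsOfCard (n + 3) := ⟨hvσ.2, card_image_of_isCellT hvσ⟩
  obtain ⟨μ, hμ⟩ := exists_perm_of_image_subset (x := τ) (hc.1 _ ht).1 (by rw [(hc.1 _ ht).2])
  have hface (i : Fin (n + 3)) :
      X.disorientSign c (τ ∘ i.succAbove) = sign μ * (-1) ^ (i : ℕ) := by
    have hfi := (hvσ.comp_succAbove i).1
    rw [hc.disorientSign_eq hfi ht (image_comp_subset τ _), hμ,
      inducedSign_perm_comp hvσ.1 hfi (image_comp_subset τ _)]
    simpa using congrArg (sign μ * ·) (inducedSign_comp_succAbove hvσ.1 i 1)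
  have hσ : σ = τ ∘ (0 : Fin (n + 3)).succAbove := rfl
  rw [cons_comp_succAbove, hface, hσ, hface, Fin.val_succ, Fin.val_zero, pow_succ, pow_zero,
    mul_one, mul_left_comm, ← mul_assoc ((-1) ^ (k : ℕ)), Int.units_mul_self, one_mul, mul_neg_one]

theorem IsDisorientation.nbrW_disorientForm [Fintype V]
    (hc : IsDisorientation n (X.cellsOfCard (n + 3)) c) (σ : Fin (n + 2) → V) :
    X.nbrW (X.disorientForm c) σ = -((n : ℝ) + 2) * X.disorientForm c σ := by
  rw [nbrW_eq_sum]
  by_cases hσ : X.IsCellT σ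
  · have hterm (v) (hv : v ∈ X.linkVerts σ) (k : Fin (n + 2)) :
        (-1) ^ (k : ℕ) * X.degNormalized (X.disorientForm c) (Fin.cons v (σ ∘ k.succAbove)) =
          -(X.disorientSign c σ : ℝ) := by
      have hvσ : X.IsCellT (Fin.cons v σ) := (mem_filter.mp hv).2
      have hν : X.IsCellT (Fin.cons v (σ ∘ k.succAbove)) := by
        rw [cons_comp_succAbove]
        exact hvσ.comp_succAbove _
      have hdeg : (X.degT (Fin.cons v (σ ∘ k.succAbove)) : ℝ) ≠ 0 := by
        rw [cons_comp_succAbove]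
        exact_mod_cast (hvσ.degT_comp_succAbove_pos _).ne'
      rw [degNormalized, disorientForm, if_pos hν, mul_div_cancel_left₀ _ hdeg]
      have h := congrArg (fun u : ℤˣ => ((u : ℤ) : ℝ)) (hc.disorientSign_cons_face hvσ k)
      push_cast at h
      exact h
    rw [sum_congr rfl fun v hv => sum_congr rfl fun k _ => hterm v hv k]
    simp [disorientForm, hσ, card_linkVerts hσ.1]
    ring
  · have hempty : X.linkVerts σ = ∅ := filter_eq_empty_iff.mpr fun v _ hv => hσ hv.tail
    simp [hempty, disorientForm, hσ]

theorem IsDisorientation.lapUp_disorientForm [Fintype V]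
    (hc : IsDisorientation n (X.cellsOfCard (n + 3)) c) :
    X.lapUp (X.disorientForm c) = ((n : ℝ) + 3) • X.disorientForm c := by
  funext σ
  simp only [lapUp, hc.nbrW_disorientForm, Pi.smul_apply, smul_eq_mul]
  ring

end Disorientations

end SComplex

theorem stmt5_general {V : Type*} [Fintype V] (m : ℕ) (X : SComplex V)
    (htop : ∃ s ∈ X.cells, s.card = m + 3)
    (hconn : ∀ σ σ' : Fin (m + 2) → V, X.IsCellT σ → X.IsCellT σ' →
      Relation.ReflTransGen X.Nbr σ σ') :
    (∃ f : (Fin (m + 2) → V) → ℝ, X.IsForm (m + 2) f ∧ f ≠ 0 ∧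
        X.lapUp f = ((m : ℝ) + 3) • f) ↔
      HasDisorientation m {t : Finset V | t ∈ X.cells ∧ t.card = m + 3} := by
  constructor
  · rintro ⟨f, hf, hf0, heig⟩
    exact X.hasDisorientation_of_lapUp_eq hconn hf hf0 heig
  · rintro ⟨c, hc⟩
    exact ⟨X.disorientForm c, IsDisorientation.isForm hc, disorientForm_ne_zero htop,
      IsDisorientation.lapUp_disorientForm hc⟩

/-- For a finite uniform `(d-1)`-connected `d`-dimensional complex
(`d = m+2`), `d+1` is an eigenvalue of the upper Laplacian `Δ⁺` iff `X` is
disorientable. -/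
theorem stmt5 {V : Type*} [Fintype V] (m : ℕ) (X : SComplex V)
    (hdim : ∀ s ∈ X.cells, s.card ≤ m + 3)
    (huni : ∀ s ∈ X.cells, ∃ t ∈ X.cells, t.card = m + 3 ∧ s ⊆ t)
    (htop : ∃ s ∈ X.cells, s.card = m + 3)
    (hconn : ∀ σ σ' : Fin (m + 2) → V, X.IsCellT σ → X.IsCellT σ' →
      Relation.ReflTransGen X.Nbr σ σ') :
    (∃ f : (Fin (m + 2) → V) → ℝ, X.IsForm (m + 2) f ∧ f ≠ 0 ∧
        X.lapUp f = ((m : ℝ) + 3) • f) ↔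
      HasDisorientation m {t : Finset V | t ∈ X.cells ∧ t.card = m + 3} :=
  stmt5_general m X htop hconn
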